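/- Let (x_t)_{t≥1} ⊂ R^d with ‖x_t‖ ≤ L for all t, and V_t = λI + Σ_{k=1}^{t−1} x_k x_kᵀ with λ > 0. Then for all T, Σ_{t=1}^T ‖x_t‖²_{V_t⁻¹} ≤ 2d log(1 + TL²/(dλ)) + (3dL²/(λ log 2))·log(1 + L²/(λ log 2)). -/

import Mathlib

/-! The matrix determinant lemma gives `det V_{t+1} = det V_t · (1 + ‖x_t‖²_{V_t⁻¹})`, so
`∑_{t<T} log (1 + ‖x_t‖²_{V_t⁻¹}) = log det V_T - d log λ`, which AM-GM on the eigenvalues of `V_T`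
bounds by `d log (1 + T L² / (d λ))`. A potential at most `1` is at most twice its logarithm.
Each of the `N` potentials exceeding `1` is at most `L² / λ`, since `V_t ≥ λ I`. Deleting all other
vectors only shrinks the design matrices in the Loewner order, hence only increases the `N` large
potentials, so the same determinant bound applied to the `N` retained vectors gives
`N log 2 ≤ d log (1 + N L² / (d λ))`, which forces `N ≤ (3 d / log 2) log (1 + L² / (λ log 2))`. -/

open Matrix Finset

/-- The design matrix `V_t = λ I + ∑_{k < t} x_k x_kᵀ`. -/
noncomputable def designMatrix {d : ℕ} (lam : ℝ) (x : ℕ → Fin d → ℝ) (t : ℕ) :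
    Matrix (Fin d) (Fin d) ℝ :=
  lam • (1 : Matrix (Fin d) (Fin d) ℝ) + ∑ k ∈ Finset.range t, vecMulVec (x k) (x k)

namespace Real

theorem le_two_mul_log_one_add {u : ℝ} (h0 : 0 ≤ u) (h2 : u ≤ 2) : u ≤ 2 * log (1 + u) := by
  have h := le_log_one_add_of_nonneg h0
  calc u ≤ 2 * (2 * u / (u + 2)) := by
        rw [mul_div_assoc', le_div_iff₀ (by linarith)]
        nlinarith
    _ ≤ 2 * log (1 + u) := by gcongr

theorem le_three_mul_log_one_add_mul {a b u : ℝ} (ha : 0 ≤ a) (hb : 0 ≤ b) (hu : 0 ≤ u)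
    (h : u ≤ a * log (1 + b * u)) : u ≤ 3 * a * log (1 + a * b) := by
  have hbu : 0 ≤ b * u := mul_nonneg hb hu
  rcases lt_or_ge (a * b) 1 with hab | hab
  · have hlog : log (1 + b * u) ≤ b * u := by
      linarith [log_le_sub_one_of_pos (by linarith : 0 < 1 + b * u)]
    have : u ≤ a * b * u := h.trans <| by
      rw [mul_assoc]
      exact mul_le_mul_of_nonneg_left hlog ha
    have hu0 : u = 0 := by nlinarith
    rw [hu0]
    exact mul_nonneg (by positivity) (log_nonneg (by nlinarith))
  · have ha0 : a ≠ 0 := by rintro rfl; linarith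
    have hb0 : b ≠ 0 := by rintro rfl; linarith
    set c := 3 * (a * b)
    have hc : 1 ≤ c := by linarith
    -- concavity of `log` at `c`, chosen so that the linear term costs only `u / 3`
    have hlog : log (1 + b * u) ≤ log c + b * u / c := by
      have h' := log_le_sub_one_of_pos (show 0 < (1 + b * u) / c by positivity)
      rw [log_div (by positivity) (by positivity), add_div] at h'
      linarith [div_le_one_of_le₀ hc (by positivity : (0 : ℝ) ≤ c)]
    have hc2 : log c ≤ 2 * log (1 + a * b) := by
      rw [← Nat.cast_two, ← log_pow]
      exact log_le_log (by positivity) (by nlinarith)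
    have hlin : a * (b * u / c) = u / 3 := by simp only [c]; field_simp
    have := mul_le_mul_of_nonneg_left (hlog.trans (add_le_add_left hc2 _)) ha
    nlinarith

end Real

namespace Matrix

variable {n : Type*} [Fintype n] [DecidableEq n]

theorem det_add_vecMulVec {α : Type*} [CommRing α] {A : Matrix n n α} (hA : IsUnit A.det)
    (u v : n → α) : (A + vecMulVec u v).det = A.det * (1 + v ⬝ᵥ A⁻¹ *ᵥ u) := by
  rw [vecMulVec_eq Unit, det_add_replicateCol_mul_replicateRow hA]
  congr 1
  rw [det_unique, add_apply, one_apply_eq, Matrix.mul_assoc, ← replicateCol_mulVec,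
    replicateRow_mul_replicateCol_apply]

namespace PosDef

variable {A B : Matrix n n ℝ}

theorem mulVec_inv_mulVec (hA : A.PosDef) (u : n → ℝ) : A *ᵥ (A⁻¹ *ᵥ u) = u := by
  rw [mulVec_mulVec, mul_nonsing_inv _ hA.det_pos.ne'.isUnit, one_mulVec]

theorem inv_mulVec_dotProduct_mulVec (hA : A.PosDef) (u y : n → ℝ) :
    (A⁻¹ *ᵥ u) ⬝ᵥ (A *ᵥ y) = u ⬝ᵥ y := by
  rw [dotProduct_mulVec, ← mulVec_transpose, ← conjTranspose_eq_transpose_of_trivial,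
    hA.isHermitian.eq, hA.mulVec_inv_mulVec]

theorem two_mul_dotProduct_sub_le (hA : A.PosDef) (u y : n → ℝ) :
    2 * (u ⬝ᵥ y) - y ⬝ᵥ A *ᵥ y ≤ u ⬝ᵥ A⁻¹ *ᵥ u := by
  have h := hA.posSemidef.dotProduct_mulVec_nonneg (A⁻¹ *ᵥ u - y)
  simp only [star_trivial, mulVec_sub, hA.mulVec_inv_mulVec, dotProduct_sub, sub_dotProduct,
    hA.inv_mulVec_dotProduct_mulVec] at h
  rw [dotProduct_comm (A⁻¹ *ᵥ u), dotProduct_comm y u] at h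
  linarith

theorem dotProduct_inv_mulVec_le (hA : A.PosDef) (hB : B.PosDef)
    (hAB : ∀ y, y ⬝ᵥ A *ᵥ y ≤ y ⬝ᵥ B *ᵥ y) (u : n → ℝ) :
    u ⬝ᵥ B⁻¹ *ᵥ u ≤ u ⬝ᵥ A⁻¹ *ᵥ u := by
  set y := B⁻¹ *ᵥ u
  have hy : y ⬝ᵥ B *ᵥ y = u ⬝ᵥ y := by
    rw [hB.mulVec_inv_mulVec, dotProduct_comm]
  calc u ⬝ᵥ y = 2 * (u ⬝ᵥ y) - y ⬝ᵥ B *ᵥ y := by rw [hy]; ring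
    _ ≤ 2 * (u ⬝ᵥ y) - y ⬝ᵥ A *ᵥ y := by linarith [hAB y]
    _ ≤ u ⬝ᵥ A⁻¹ *ᵥ u := hA.two_mul_dotProduct_sub_le u y

theorem log_det_le (hA : A.PosDef) :
    Real.log A.det ≤ Fintype.card n * Real.log (A.trace / Fintype.card n) := by
  rcases isEmpty_or_nonempty n with hn | hn
  · simp
  set μ := hA.isHermitian.eigenvalues
  have hμ : ∀ i, 0 < μ i := hA.eigenvalues_pos
  have hc : (0 : ℝ) < Fintype.card n := by exact_mod_cast Fintype.card_pos
  have jensen := StrictConcaveOn.concaveOn strictConcaveOn_log_Ioi |>.le_map_sum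
    (t := univ) (w := fun _ => (Fintype.card n : ℝ)⁻¹) (p := μ) (fun _ _ => by positivity)
    (by simp [hc.ne']) (fun i _ => hμ i)
  rw [hA.isHermitian.det_eq_prod_eigenvalues, hA.isHermitian.trace_eq_sum_eigenvalues]
  simp only [RCLike.ofReal_real_eq_id, id, smul_eq_mul, ← mul_sum] at jensen ⊢
  rw [Real.log_prod fun i _ => (hμ i).ne', div_eq_inv_mul]
  rwa [inv_mul_le_iff₀ hc] at jensen

end PosDef

end Matrix

section DesignMatrix

variable {d : ℕ} {lam : ℝ} (x : ℕ → Fin d → ℝ)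

/-- `‖x_t‖²_{V_t⁻¹}` -/
noncomputable def ellipticalPotential (lam : ℝ) (x : ℕ → Fin d → ℝ) (t : ℕ) : ℝ :=
  x t ⬝ᵥ (designMatrix lam x t)⁻¹ *ᵥ x t

theorem designMatrix_zero : designMatrix lam x 0 = lam • 1 := by
  simp [designMatrix]

theorem designMatrix_succ (t : ℕ) :
    designMatrix lam x (t + 1) = designMatrix lam x t + vecMulVec (x t) (x t) := by
  simp only [designMatrix, sum_range_succ, add_assoc]

theorem designMatrix_posDef (hlam : 0 < lam) (t : ℕ) : (designMatrix lam x t).PosDef :=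
  (PosDef.one.smul hlam).add_posSemidef <| posSemidef_sum _ fun k _ => by
    simpa using posSemidef_vecMulVec_self_star (x k)

theorem dotProduct_designMatrix_mulVec (t : ℕ) (y : Fin d → ℝ) :
    y ⬝ᵥ designMatrix lam x t *ᵥ y = lam * (y ⬝ᵥ y) + ∑ k ∈ range t, (x k ⬝ᵥ y) ^ 2 := by
  induction t with
  | zero => simp [designMatrix_zero, smul_mulVec, dotProduct_smul]
  | succ t ih =>
    rw [designMatrix_succ, add_mulVec, dotProduct_add, ih, sum_range_succ, vecMulVec_mulVec,
      op_smul_eq_smul, dotProduct_smul, smul_eq_mul, dotProduct_comm y (x t), add_assoc, sq]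

theorem trace_designMatrix (t : ℕ) :
    (designMatrix lam x t).trace = d * lam + ∑ k ∈ range t, x k ⬝ᵥ x k := by
  simp [designMatrix, trace_sum, trace_vecMulVec, mul_comm]

theorem ellipticalPotential_nonneg (hlam : 0 < lam) (t : ℕ) :
    0 ≤ ellipticalPotential lam x t := by
  simpa [ellipticalPotential] using
    (designMatrix_posDef x hlam t).posSemidef.inv.dotProduct_mulVec_nonneg (x t)

theorem smul_dotProduct_self_le_dotProduct_designMatrix_mulVec (t : ℕ) (y : Fin d → ℝ) :
    lam * (y ⬝ᵥ y) ≤ y ⬝ᵥ designMatrix lam x t *ᵥ y := by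
  rw [dotProduct_designMatrix_mulVec]
  exact le_add_of_nonneg_right <| sum_nonneg fun k _ => sq_nonneg _

theorem ellipticalPotential_le (hlam : 0 < lam) (t : ℕ) :
    ellipticalPotential lam x t ≤ x t ⬝ᵥ x t / lam := by
  have hinv : (lam • 1 : Matrix (Fin d) (Fin d) ℝ)⁻¹ = lam⁻¹ • 1 :=
    inv_eq_right_inv (by simp [smul_smul, hlam.ne'])
  have h := (PosDef.one.smul hlam).dotProduct_inv_mulVec_le (designMatrix_posDef x hlam t)
    (fun y => by
      simpa [smul_mulVec, dotProduct_smul] using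
        smul_dotProduct_self_le_dotProduct_designMatrix_mulVec x t y) (x t)
  simpa [ellipticalPotential, hinv, smul_mulVec, dotProduct_smul, div_eq_inv_mul] using h

theorem det_designMatrix (hlam : 0 < lam) (T : ℕ) :
    (designMatrix lam x T).det = lam ^ d * ∏ t ∈ range T, (1 + ellipticalPotential lam x t) := by
  induction T with
  | zero => simp [designMatrix_zero]
  | succ T ih =>
    rw [designMatrix_succ, det_add_vecMulVec (designMatrix_posDef x hlam T).det_pos.ne'.isUnit, ih,
      prod_range_succ, ellipticalPotential]
    ring

theorem sum_log_one_add_ellipticalPotential_le (hlam : 0 < lam) (T : ℕ) {s : ℝ}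
    (hs : ∑ k ∈ range T, x k ⬝ᵥ x k ≤ s) :
    ∑ t ∈ range T, Real.log (1 + ellipticalPotential lam x t)
      ≤ d * Real.log (1 + s / (d * lam)) := by
  have hf : ∀ t, 0 < 1 + ellipticalPotential lam x t := fun t => by
    linarith [ellipticalPotential_nonneg x hlam t]
  have hlogdet : Real.log (designMatrix lam x T).det
      = d * Real.log lam + ∑ t ∈ range T, Real.log (1 + ellipticalPotential lam x t) := by
    rw [det_designMatrix x hlam, Real.log_mul (by positivity) (prod_pos fun t _ => hf t).ne',
      Real.log_pow, Real.log_prod fun t _ => (hf t).ne']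
  have hamgm := (designMatrix_posDef x hlam T).log_det_le
  rw [hlogdet, trace_designMatrix, Fintype.card_fin] at hamgm
  rcases eq_or_ne d 0 with rfl | hd
  · simpa using hamgm
  have hmass : 0 ≤ ∑ k ∈ range T, x k ⬝ᵥ x k :=
    sum_nonneg fun k _ => dotProduct_star_self_nonneg (x k)
  have hsplit : (d * lam + ∑ k ∈ range T, x k ⬝ᵥ x k) / d
      = lam * (1 + (∑ k ∈ range T, x k ⬝ᵥ x k) / (d * lam)) := by
    field_simp
  rw [hsplit, Real.log_mul hlam.ne' (by positivity)] at hamgm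
  have hmono : d * Real.log (1 + (∑ k ∈ range T, x k ⬝ᵥ x k) / (d * lam))
      ≤ d * Real.log (1 + s / (d * lam)) := by
    gcongr
  linarith

theorem ellipticalPotential_le_ite (hlam : 0 < lam) {p : ℕ → Prop} [DecidablePred p] {t : ℕ}
    (ht : p t) :
    ellipticalPotential lam x t ≤ ellipticalPotential lam (fun k => if p k then x k else 0) t := by
  unfold ellipticalPotential
  simp only [if_pos ht]
  refine (designMatrix_posDef _ hlam t).dotProduct_inv_mulVec_le (designMatrix_posDef x hlam t)
    (fun y => ?_) (x t)
  rw [dotProduct_designMatrix_mulVec, dotProduct_designMatrix_mulVec]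
  gcongr 1
  refine sum_le_sum fun k _ => ?_
  split_ifs
  · rfl
  · simpa using sq_nonneg (x k ⬝ᵥ y)

theorem card_filter_one_lt_mul_log_two_le (hlam : 0 < lam) {L : ℝ}
    (hx : ∀ t, x t ⬝ᵥ x t ≤ L ^ 2) (T : ℕ) :
    #{t ∈ range T | 1 < ellipticalPotential lam x t} * Real.log 2
      ≤ d * Real.log
          (1 + #{t ∈ range T | 1 < ellipticalPotential lam x t} * L ^ 2 / (d * lam)) := by
  set S := {t ∈ range T | 1 < ellipticalPotential lam x t}
  set x' : ℕ → Fin d → ℝ := fun k => if k ∈ S then x k else 0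
  have hS : S ⊆ range T := filter_subset _ _
  have hmass : ∑ k ∈ range T, x' k ⬝ᵥ x' k ≤ #S * L ^ 2 :=
    calc ∑ k ∈ range T, x' k ⬝ᵥ x' k = ∑ k ∈ S, x k ⬝ᵥ x k := by
          rw [← sum_subset hS fun k _ hk => by simp [x', hk]]
          exact sum_congr rfl fun k hk => by simp [x', hk]
      _ ≤ ∑ k ∈ S, L ^ 2 := sum_le_sum fun k _ => hx k
      _ = #S * L ^ 2 := by rw [sum_const, nsmul_eq_mul]
  calc #S * Real.log 2 = ∑ t ∈ S, Real.log 2 := by rw [sum_const, nsmul_eq_mul]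
    _ ≤ ∑ t ∈ S, Real.log (1 + ellipticalPotential lam x' t) := sum_le_sum fun t ht => by
        have := ellipticalPotential_le_ite x hlam ht
        exact Real.log_le_log two_pos (by linarith [(mem_filter.1 ht).2])
    _ ≤ ∑ t ∈ range T, Real.log (1 + ellipticalPotential lam x' t) :=
        sum_le_sum_of_subset_of_nonneg hS fun t _ _ =>
          Real.log_nonneg (by linarith [ellipticalPotential_nonneg x' hlam t])
    _ ≤ d * Real.log (1 + #S * L ^ 2 / (d * lam)) :=
        sum_log_one_add_ellipticalPotential_le x' hlam T hmass

theorem card_filter_one_lt_ellipticalPotential_le (hlam : 0 < lam) {L : ℝ}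
    (hx : ∀ t, x t ⬝ᵥ x t ≤ L ^ 2) (T : ℕ) :
    (#{t ∈ range T | 1 < ellipticalPotential lam x t} : ℝ)
      ≤ 3 * (d / Real.log 2) * Real.log (1 + L ^ 2 / (lam * Real.log 2)) := by
  have hcount := card_filter_one_lt_mul_log_two_le x hlam hx T
  set N : ℝ := ((#{t ∈ range T | 1 < ellipticalPotential lam x t} : ℕ) : ℝ)
  have hlog2 : 0 < Real.log 2 := Real.log_pos one_lt_two
  rcases eq_or_ne d 0 with rfl | hd
  · simpa using nonpos_of_mul_nonpos_left (by simpa using hcount) hlog2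
  have h : N ≤ d / Real.log 2 * Real.log (1 + L ^ 2 / (d * lam) * N) := by
    rw [div_mul_eq_mul_div, le_div_iff₀ hlog2, div_mul_eq_mul_div, mul_comm _ N]
    exact hcount
  have := Real.le_three_mul_log_one_add_mul (by positivity) (by positivity) (by positivity) h
  rwa [show d / Real.log 2 * (L ^ 2 / (d * lam)) = L ^ 2 / (lam * Real.log 2) by field_simp]
    at this

theorem sum_ellipticalPotential_le (hlam : 0 < lam) {L : ℝ} (hx : ∀ t, x t ⬝ᵥ x t ≤ L ^ 2)
    (T : ℕ) :
    ∑ t ∈ range T, ellipticalPotential lam x t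
      ≤ 2 * ∑ t ∈ range T, Real.log (1 + ellipticalPotential lam x t)
        + #{t ∈ range T | 1 < ellipticalPotential lam x t} * (L ^ 2 / lam) := by
  rw [← sum_filter_add_sum_filter_not (range T) (1 < ellipticalPotential lam x ·), add_comm]
  have hf : ∀ t, 0 ≤ ellipticalPotential lam x t := ellipticalPotential_nonneg x hlam
  have hsmall : ∑ t ∈ range T with ¬1 < ellipticalPotential lam x t, ellipticalPotential lam x t
      ≤ 2 * ∑ t ∈ range T, Real.log (1 + ellipticalPotential lam x t) := by
    rw [mul_sum]
    calc _ ≤ ∑ t ∈ range T with ¬1 < ellipticalPotential lam x t,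
            2 * Real.log (1 + ellipticalPotential lam x t) :=
          sum_le_sum fun t ht => Real.le_two_mul_log_one_add (hf t)
            (by linarith [not_lt.1 (mem_filter.1 ht).2])
      _ ≤ _ := sum_le_sum_of_subset_of_nonneg (filter_subset _ _) fun t _ _ =>
          mul_nonneg zero_le_two (Real.log_nonneg (by linarith [hf t]))
  have hlarge : ∑ t ∈ range T with 1 < ellipticalPotential lam x t, ellipticalPotential lam x t
      ≤ #{t ∈ range T | 1 < ellipticalPotential lam x t} * (L ^ 2 / lam) := by
    rw [← nsmul_eq_mul]
    exact sum_le_card_nsmul _ _ _ fun t _ =>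
      (ellipticalPotential_le x hlam t).trans (by gcongr; exact hx t)
  exact add_le_add hsmall hlarge

end DesignMatrix

theorem elliptical_potential_untruncated_general
    {d : ℕ} {lam L : ℝ} (hlam : 0 < lam)
    (x : ℕ → Fin d → ℝ) (hx : ∀ t, Real.sqrt (x t ⬝ᵥ x t) ≤ L) (T : ℕ) :
    ∑ t ∈ Finset.range T, x t ⬝ᵥ (designMatrix lam x t)⁻¹.mulVec (x t)
      ≤ 2 * d * Real.log (1 + T * L ^ 2 / (d * lam))
        + (3 * d * L ^ 2 / (lam * Real.log 2)) * Real.log (1 + L ^ 2 / (lam * Real.log 2)) := by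
  have hxL : ∀ t, x t ⬝ᵥ x t ≤ L ^ 2 := fun t => (Real.sqrt_le_iff.1 (hx t)).2
  have hmass : ∑ k ∈ range T, x k ⬝ᵥ x k ≤ T * L ^ 2 := by
    simpa using sum_le_card_nsmul (range T) _ _ fun k _ => hxL k
  have hlog := sum_log_one_add_ellipticalPotential_le x hlam T hmass
  have hcard := card_filter_one_lt_ellipticalPotential_le x hlam hxL T
  have hsplit := sum_ellipticalPotential_le x hlam hxL T
  calc ∑ t ∈ range T, ellipticalPotential lam x t
      ≤ 2 * ∑ t ∈ range T, Real.log (1 + ellipticalPotential lam x t)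
        + #{t ∈ range T | 1 < ellipticalPotential lam x t} * (L ^ 2 / lam) := hsplit
    _ ≤ 2 * (d * Real.log (1 + T * L ^ 2 / (d * lam)))
        + 3 * (d / Real.log 2) * Real.log (1 + L ^ 2 / (lam * Real.log 2)) * (L ^ 2 / lam) := by
        gcongr
    _ = _ := by ring

/-- **Elliptical potential lemma, untruncated version** (Lemma "Elliptical lemma" 1).
If `‖x_t‖ ≤ L` and `V_t = λI + ∑_{k<t} x_k x_kᵀ` with `λ > 0`, then for all `T`,
`∑_{t<T} ‖x_t‖²_{V_t⁻¹} ≤ 2d log(1 + TL²/(dλ)) + (3dL²/(λ log 2)) log(1 + L²/(λ log 2))`. -/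
theorem elliptical_potential_untruncated
    {d : ℕ} (hd : 0 < d) {lam L : ℝ} (hlam : 0 < lam) (hL : 0 < L)
    (x : ℕ → Fin d → ℝ) (hx : ∀ t, Real.sqrt (x t ⬝ᵥ x t) ≤ L) (T : ℕ) :
    ∑ t ∈ Finset.range T, x t ⬝ᵥ (designMatrix lam x t)⁻¹.mulVec (x t)
      ≤ 2 * d * Real.log (1 + T * L ^ 2 / (d * lam))
        + (3 * d * L ^ 2 / (lam * Real.log 2)) * Real.log (1 + L ^ 2 / (lam * Real.log 2)) :=
  elliptical_potential_untruncated_general hlam x hx T
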